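/- Define Delannoy-type numbers D_2 on finitely supported multi-indices by D_2(0) = 1 and D_2(m) = Σ_{u ⊆ supp(m), 1 ≤ |u| ≤ 2} D_2(m − e_u) for m ≠ 0, where e_u = Σ_{j∈u} e_j. Then D_2(m) ≤ |m|! · a_{|m|} for all m, where a_k = ((1+√3)^{k+1} − (1−√3)^{k+1})/(2^{k+1}√3). -/

import Mathlib

/-- Order (total degree) of a finitely supported multi-index. -/
def deg (m : ℕ →₀ ℕ) : ℕ := m.sum fun _ k => k

/-- The multi-index `e_u = Σ_{j ∈ u} e_j`. -/
noncomputable def eU (u : Finset ℕ) : ℕ →₀ ℕ := ∑ j ∈ u, Finsupp.single j 1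

/-- The sequence `a_k = ((1+√3)^(k+1) − (1−√3)^(k+1)) / (2^(k+1)·√3)`. -/
noncomputable def aSeq (k : ℕ) : ℝ :=
  ((1 + Real.sqrt 3) ^ (k + 1) - (1 - Real.sqrt 3) ^ (k + 1)) /
    (2 ^ (k + 1) * Real.sqrt 3)

/-!
Both sides satisfy comparable recursions in the degree. Since `(1 ± √3)/2` are the roots of
`x² = x + 1/2`, the numbers `a'_k = k! a_k` satisfy `a'_{k+2} = (k+2) a'_{k+1} + C(k+2, 2) a'_k`.
A multi-index of degree `n` has `s ≤ n` nonzero coordinates, so the recursion for `D` expresses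
`D m` through `s` values in degree `n - 1` and `C(s, 2)` values in degree `n - 2`; strong
induction on the degree then gives `D m ≤ a'_{|m|}`.
-/

open Finset Nat Real

lemma aSeq_zero : aSeq 0 = 1 := by
  rw [aSeq]; field_simp; ring

lemma aSeq_one : aSeq 1 = 1 := by
  rw [aSeq]; field_simp; ring

lemma aSeq_add_two (k : ℕ) : aSeq (k + 2) = aSeq (k + 1) + aSeq k / 2 := by
  have hs : √3 ^ 2 = 3 := Real.sq_sqrt (by norm_num)
  have hnum : (1 + √3) ^ (k + 2 + 1) - (1 - √3) ^ (k + 2 + 1) =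
      2 * ((1 + √3) ^ (k + 1 + 1) - (1 - √3) ^ (k + 1 + 1)) +
        2 * ((1 + √3) ^ (k + 1) - (1 - √3) ^ (k + 1)) := by
    linear_combination ((1 + √3) ^ (k + 1) - (1 - √3) ^ (k + 1)) * hs
  rw [aSeq, hnum, aSeq, aSeq]
  field_simp
  ring

lemma aSeq_nonneg : ∀ k, 0 ≤ aSeq k
  | 0 => aSeq_zero ▸ zero_le_one
  | 1 => aSeq_one ▸ zero_le_one
  | k + 2 => aSeq_add_two k ▸ add_nonneg (aSeq_nonneg _) (div_nonneg (aSeq_nonneg _) zero_le_two)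

noncomputable def aFact (k : ℕ) : ℝ := k ! * aSeq k

lemma aFact_nonneg (k : ℕ) : 0 ≤ aFact k :=
  mul_nonneg (by positivity) (aSeq_nonneg k)

lemma aFact_add_two (k : ℕ) :
    aFact (k + 2) = (k + 2) * aFact (k + 1) + (k + 2).choose 2 * aFact k := by
  simp only [aFact, aSeq_add_two, Nat.cast_choose_two, Nat.factorial_succ]
  push_cast
  ring

lemma mul_aFact_add_choose_two_mul_aFact_le {s n : ℕ} (hs : s ≤ n + 1) :
    s * aFact n + s.choose 2 * aFact (n - 1) ≤ aFact (n + 1) := by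
  cases n with
  | zero =>
    rw [Nat.choose_eq_zero_of_lt (by omega : s < 2)]
    interval_cases s <;> simp [aFact, aSeq_zero, aSeq_one]
  | succ k =>
    have h1 : (s : ℝ) ≤ (k + 2 : ℕ) := by exact_mod_cast hs
    have h2 : (s.choose 2 : ℝ) ≤ (k + 2).choose 2 := by exact_mod_cast Nat.choose_le_choose 2 hs
    rw [aFact_add_two, Nat.add_sub_cancel]
    push_cast at h1
    exact add_le_add (mul_le_mul_of_nonneg_right h1 (aFact_nonneg _))
      (mul_le_mul_of_nonneg_right h2 (aFact_nonneg _))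

lemma Finset.sum_powerset_filter_one_le_card_le_two {α M : Type*} [AddCommMonoid M]
    (s : Finset α) (f : ℕ → M) :
    ∑ u ∈ s.powerset.filter (fun u => 1 ≤ u.card ∧ u.card ≤ 2), f u.card =
      s.card • f 1 + s.card.choose 2 • f 2 := by
  have hdisj : Disjoint (s.powersetCard 1) (s.powersetCard 2) :=
    disjoint_left.2 fun u h1 h2 => by rw [mem_powersetCard] at h1 h2; omega
  have hsplit : s.powerset.filter (fun u => 1 ≤ u.card ∧ u.card ≤ 2) =
      (s.powersetCard 1).disjUnion (s.powersetCard 2) hdisj := by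
    ext u
    simp only [mem_filter, mem_powerset, mem_disjUnion, mem_powersetCard]
    grind
  have hconst (k : ℕ) : ∑ u ∈ s.powersetCard k, f u.card = s.card.choose k • f k := by
    rw [sum_congr rfl fun u hu => congrArg f (mem_powersetCard.1 hu).2, sum_const,
      card_powersetCard]
  rw [hsplit, sum_disjUnion, hconst, hconst, Nat.choose_one_right]

lemma deg_eq_degree (m : ℕ →₀ ℕ) : deg m = m.degree := rfl

lemma eU_apply (u : Finset ℕ) (j : ℕ) : eU u j = if j ∈ u then 1 else 0 := by
  classical
  simp [eU, Finsupp.finsetSum_apply, Finsupp.single_apply]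

lemma deg_eU (u : Finset ℕ) : deg (eU u) = u.card := by
  simp [deg_eq_degree, eU, map_sum]

lemma eU_le_of_subset_support {u : Finset ℕ} {m : ℕ →₀ ℕ} (hu : u ⊆ m.support) :
    eU u ≤ m := by
  intro j
  rw [eU_apply]
  split_ifs with h
  · exact Nat.one_le_iff_ne_zero.2 (Finsupp.mem_support_iff.1 (hu h))
  · exact zero_le _

lemma deg_sub_eU {u : Finset ℕ} {m : ℕ →₀ ℕ} (hu : u ⊆ m.support) :
    deg (m - eU u) = deg m - u.card := by
  have h := map_add Finsupp.degree (m - eU u) (eU u)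
  rw [tsub_add_cancel_of_le (eU_le_of_subset_support hu)] at h
  rw [← deg_eU, deg_eq_degree, deg_eq_degree, deg_eq_degree, h, Nat.add_sub_cancel]

lemma card_support_le_deg (m : ℕ →₀ ℕ) : m.support.card ≤ deg m := by
  rw [← deg_eU]
  exact Finsupp.degree_mono (eU_le_of_subset_support subset_rfl)

lemma sum_aFact_deg_sub_card_le {m : ℕ →₀ ℕ} (hm : m ≠ 0) :
    ∑ u ∈ m.support.powerset.filter (fun u => 1 ≤ u.card ∧ u.card ≤ 2),
      aFact (deg m - u.card) ≤ aFact (deg m) := by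
  obtain ⟨n, hn⟩ : ∃ n, deg m = n + 1 :=
    Nat.exists_eq_succ_of_ne_zero (by rwa [deg_eq_degree, Ne, Finsupp.degree_eq_zero_iff])
  rw [sum_powerset_filter_one_le_card_le_two m.support (fun k => aFact (deg m - k)),
    nsmul_eq_mul, nsmul_eq_mul, hn, Nat.add_sub_cancel, show n + 1 - 2 = n - 1 by omega]
  exact mul_aFact_add_choose_two_mul_aFact_le (hn ▸ card_support_le_deg m)

theorem stmt_15 (D : (ℕ →₀ ℕ) → ℕ) (hD0 : D 0 = 1)
    (hDrec : ∀ m : ℕ →₀ ℕ, m ≠ 0 →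
      D m = ∑ u ∈ m.support.powerset.filter (fun u => 1 ≤ u.card ∧ u.card ≤ 2),
        D (m - eU u)) :
    ∀ m : ℕ →₀ ℕ, (D m : ℝ) ≤ Nat.factorial (deg m) * aSeq (deg m) := by
  intro m
  induction hn : deg m using Nat.strong_induction_on generalizing m with
  | _ n ih =>
    subst hn
    change (D m : ℝ) ≤ aFact (deg m)
    rcases eq_or_ne m 0 with rfl | hm
    · simp [hD0, aFact, deg, aSeq_zero]
    rw [hDrec m hm, Nat.cast_sum]
    refine (sum_le_sum fun u hu => ?_).trans (sum_aFact_deg_sub_card_le hm)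
    obtain ⟨hsub, hcard, -⟩ : u ⊆ m.support ∧ 1 ≤ u.card ∧ u.card ≤ 2 := by
      simpa only [mem_filter, mem_powerset] using hu
    have hlt : deg (m - eU u) < deg m := by
      have := (card_le_card hsub).trans (card_support_le_deg m)
      rw [deg_sub_eU hsub]
      omega
    exact deg_sub_eU hsub ▸ ih _ hlt _ rfl
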